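/- arXiv:1609.05809 — 5 statements merged into one kernel-verified Lean document; each statement's English description precedes it below -/
import Mathlib

section
/- Two spanning 2-forests F and F' of a connected graph G induce different vertex partitions if and only if there exists an edge e of F' such that F together with e is a spanning tree of G. -/
open Finset Matrix
open scoped Classical

variable {V E : Type*}

/-- Two vertices are joined by an edge of the edge set `S`. -/
def adjRel (src tgt : E → V) (S : Finset E) (u v : V) : Prop :=
  ∃ e ∈ S, (src e = u ∧ tgt e = v) ∨ (src e = v ∧ tgt e = u)

/-- Reachability using only edges in `S`. -/
def reach (src tgt : E → V) (S : Finset E) : V → V → Prop :=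
  Relation.EqvGen (adjRel src tgt S)

/-- Number of connected components of the spanning subgraph with edge set `S`. -/
noncomputable def nComp (src tgt : E → V) (S : Finset E) : ℕ :=
  Nat.card (Quotient (Relation.EqvGen.setoid (adjRel src tgt S)))

/-- A spanning tree: connected spanning subgraph with `|V| - 1` edges. -/
def IsSpanningTree (src tgt : E → V) [Fintype V] (S : Finset E) : Prop :=
  nComp src tgt S = 1 ∧ S.card + 1 = Fintype.card V

/-- A spanning 2-forest: spanning subgraph with exactly two connected
components and `|V| - 2` edges (hence acyclic). -/
def IsSpanning2Forest (src tgt : E → V) [Fintype V] (S : Finset E) : Prop :=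
  nComp src tgt S = 2 ∧ S.card + 2 = Fintype.card V

/-- The edges of `S` with both endpoints in `X` (edge set of the induced subgraph `S[X]`). -/
noncomputable def inducedEdges (src tgt : E → V) (S : Finset E) (X : Finset V) : Finset E :=
  S.filter fun e => src e ∈ X ∧ tgt e ∈ X

/-- The induced subgraph `S[X]` is a (spanning) tree on the vertex set `X`. -/
def IsTreeOn (src tgt : E → V) (X : Finset V) (S : Finset E) : Prop :=
  (inducedEdges src tgt S X).card + 1 = X.card ∧
    ∀ u ∈ X, ∀ v ∈ X, reach src tgt (inducedEdges src tgt S X) u v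

/-- `X` is saturated w.r.t. the (multi)graph with all edges `E`:
the induced subgraph has exactly `2|X| - 2` edges. -/
def Saturated (src tgt : E → V) [Fintype E] (X : Finset V) : Prop :=
  X.Nonempty ∧ (inducedEdges src tgt Finset.univ X).card + 2 = 2 * X.card

section Aux

variable (src tgt : E → V)

lemma reach_mono {S T : Finset E} (h : S ⊆ T) :
    ∀ {u v}, reach src tgt S u v → reach src tgt T u v := by
  intro u v huv
  induction huv with
  | rel x y hxy =>
      obtain ⟨e, he, h2⟩ := hxy
      exact Relation.EqvGen.rel x y ⟨e, h he, h2⟩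
  | refl x => exact Relation.EqvGen.refl x
  | symm x y _ ih => exact Relation.EqvGen.symm x y ih
  | trans x y z _ _ ih1 ih2 => exact Relation.EqvGen.trans x y z ih1 ih2

lemma reach_le {S T : Finset E} (h : ∀ e ∈ T, reach src tgt S (src e) (tgt e)) :
    ∀ {u v}, reach src tgt T u v → reach src tgt S u v := by
  intro u v huv
  induction huv with
  | rel x y hxy =>
      obtain ⟨e, he, h2 | h2⟩ := hxy
      · rw [← h2.1, ← h2.2]; exact h e he
      · rw [← h2.1, ← h2.2]; exact Relation.EqvGen.symm _ _ (h e he)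
  | refl x => exact Relation.EqvGen.refl x
  | symm x y _ ih => exact Relation.EqvGen.symm x y ih
  | trans x y z _ _ ih1 ih2 => exact Relation.EqvGen.trans x y z ih1 ih2

lemma nComp_congr {S T : Finset E} (h : ∀ u v, reach src tgt S u v ↔ reach src tgt T u v) :
    nComp src tgt S = nComp src tgt T := by
  unfold nComp
  have hs : Relation.EqvGen.setoid (adjRel src tgt S)
      = Relation.EqvGen.setoid (adjRel src tgt T) := Setoid.ext h
  rw [hs]

lemma exists_not_reach {S : Finset E} (h : nComp src tgt S = 2) :
    ∃ a b : V, ¬ reach src tgt S a b := by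
  rw [nComp, Nat.card_eq_two_iff] at h
  obtain ⟨x, y, hxy, -⟩ := h
  obtain ⟨a, rfl⟩ := Quotient.exists_rep x
  obtain ⟨b, rfl⟩ := Quotient.exists_rep y
  exact ⟨a, b, fun hr => hxy (Quotient.sound hr)⟩

lemma reach_cover {S : Finset E} {a b : V} (h : nComp src tgt S = 2)
    (hab : ¬ reach src tgt S a b) (v : V) :
    reach src tgt S v a ∨ reach src tgt S v b := by
  rw [nComp, Nat.card_eq_two_iff] at h
  obtain ⟨x, y, hxy, huniv⟩ := h
  have hmem : ∀ q : Quotient (Relation.EqvGen.setoid (adjRel src tgt S)), q = x ∨ q = y := by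
    intro q
    have : q ∈ ({x, y} : Set _) := huniv ▸ Set.mem_univ q
    simpa using this
  have hne : (Quotient.mk _ a : Quotient (Relation.EqvGen.setoid (adjRel src tgt S)))
      ≠ Quotient.mk _ b := fun h' => hab (Quotient.exact h')
  have key : ∀ q : Quotient (Relation.EqvGen.setoid (adjRel src tgt S)),
      q = Quotient.mk _ a ∨ q = Quotient.mk _ b := by
    intro q
    rcases hmem (Quotient.mk _ a) with ha | ha <;> rcases hmem (Quotient.mk _ b) with hb | hb <;>
      rcases hmem q with hq | hq <;> simp_all
  rcases key (Quotient.mk _ v) with hv | hv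
  · exact Or.inl (Quotient.exact hv)
  · exact Or.inr (Quotient.exact hv)

lemma nComp_eq_one_of [Nonempty V] {S : Finset E} (h : ∀ u v, reach src tgt S u v) :
    nComp src tgt S = 1 := by
  rw [nComp, Nat.card_eq_one_iff_unique]
  refine ⟨⟨fun q1 q2 => ?_⟩, ⟨Quotient.mk _ (Classical.arbitrary V)⟩⟩
  induction q1 using Quotient.ind
  induction q2 using Quotient.ind
  exact Quotient.sound (h _ _)

end Aux

/-- Two spanning 2-forests `F` and `F'` of a connected graph `G`
induce different vertex partitions (i.e. they are not vertex-equivalent) if and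
only if there exists an edge `e` of `F'` such that `F + e` is a spanning tree. -/
theorem stmt_0 [Fintype V] [Fintype E] (src tgt : E → V)
    (hconn : nComp src tgt (Finset.univ : Finset E) = 1)
    (F F' : Finset E)
    (hF : IsSpanning2Forest src tgt F) (hF' : IsSpanning2Forest src tgt F') :
    (¬ ∀ u v : V, reach src tgt F u v ↔ reach src tgt F' u v) ↔
      ∃ e ∈ F', IsSpanningTree src tgt (insert e F) := by
  obtain ⟨hF2, hFc⟩ := hF
  obtain ⟨hF'2, hF'c⟩ := hF'
  have hV : Nonempty V := Fintype.card_pos_iff.mp (by omega)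
  constructor
  · intro hne
    by_cases hall : ∀ e ∈ F', reach src tgt F (src e) (tgt e)
    · exfalso
      apply hne
      intro u v
      constructor
      · intro huv
        by_contra huv'
        obtain ⟨a, b, hab⟩ := exists_not_reach src tgt hF2
        have ha := reach_cover src tgt hF'2 huv' a
        have hb := reach_cover src tgt hF'2 huv' b
        have hle : ∀ {x y}, reach src tgt F' x y → reach src tgt F x y :=
          fun h => reach_le src tgt hall h
        rcases ha with ha | ha <;> rcases hb with hb | hb
        · exact hab (Relation.EqvGen.trans _ _ _ (hle ha)
            (Relation.EqvGen.symm _ _ (hle hb)))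
        · exact hab (Relation.EqvGen.trans _ _ _ (hle ha)
            (Relation.EqvGen.trans _ _ _ huv (Relation.EqvGen.symm _ _ (hle hb))))
        · exact hab (Relation.EqvGen.trans _ _ _ (hle ha)
            (Relation.EqvGen.trans _ _ _ (Relation.EqvGen.symm _ _ huv)
              (Relation.EqvGen.symm _ _ (hle hb))))
        · exact hab (Relation.EqvGen.trans _ _ _ (hle ha)
            (Relation.EqvGen.symm _ _ (hle hb)))
      · exact fun h => reach_le src tgt hall h
    · push_neg at hall
      obtain ⟨e, he, hee⟩ := hall
      have heF : e ∉ F := fun h =>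
        hee (Relation.EqvGen.rel _ _ ⟨e, h, Or.inl ⟨rfl, rfl⟩⟩)
      refine ⟨e, he, ?_, ?_⟩
      · apply nComp_eq_one_of
        have hone : reach src tgt (insert e F) (src e) (tgt e) :=
          Relation.EqvGen.rel _ _ ⟨e, Finset.mem_insert_self e F, Or.inl ⟨rfl, rfl⟩⟩
        have key : ∀ w, reach src tgt (insert e F) w (src e) := by
          intro w
          rcases reach_cover src tgt hF2 hee w with h | h
          · exact reach_mono src tgt (Finset.subset_insert e F) h
          · exact Relation.EqvGen.trans _ _ _
              (reach_mono src tgt (Finset.subset_insert e F) h)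
              (Relation.EqvGen.symm _ _ hone)
        intro u v
        exact Relation.EqvGen.trans _ _ _ (key u) (Relation.EqvGen.symm _ _ (key v))
      · rw [Finset.card_insert_of_notMem heF]
        omega
  · rintro ⟨e, he, hT1, hTc⟩ hforall
    have hre : reach src tgt F (src e) (tgt e) :=
      (hforall _ _).mpr (Relation.EqvGen.rel _ _ ⟨e, he, Or.inl ⟨rfl, rfl⟩⟩)
    have : nComp src tgt (insert e F) = nComp src tgt F := by
      apply nComp_congr
      intro u v
      constructor
      · intro h
        refine reach_le src tgt ?_ h
        intro e' he'
        rcases Finset.mem_insert.mp he' with rfl | he'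
        · exact hre
        · exact Relation.EqvGen.rel _ _ ⟨e', he', Or.inl ⟨rfl, rfl⟩⟩
      · exact fun h => reach_mono src tgt (Finset.subset_insert e F) h
    rw [hT1, hF2] at this
    omega
end

section
/- Let G_0 be a graph whose edge set is the disjoint union of the edges of a spanning tree and a spanning 2-forest, and let X be a subset of vertices such that the induced subgraph G_0[X] has exactly 2|X| - 2 edges. Then for any pair (A, B) consisting of a spanning 2-forest A and a spanning tree B of G_0 (or vice versa) with disjoint edge sets whose union is E(G_0), both induced subgraphs A[X] and B[X] are spanning trees on the vertex set X. -/
open Finset Matrix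
open scoped Classical

variable {V E : Type*}

/-!
Call an edge set `S` a forest when `nComp S + |S| = |V|`; since adding an edge lowers the number
of components by at most one, `nComp S + |S|` is monotone in `S` and equals `|V|` at `S = ∅`, so
every subset of a forest is a forest. Spanning trees and spanning 2-forests are forests. In the
induced edge set `S[X]` every vertex outside `X` is isolated, so `S[X]` has at least
`|V| - |X| + 1` components, and one more if `X` is disconnected in `S[X]`. For a forest this gives
`|S[X]| ≤ |X| - 1`. As `A[X]` and `B[X]` partition the `2|X| - 2` edges of `G₀[X]`, both bounds are
attained, and attaining the bound forces `S[X]` to connect `X`.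
-/

section Components

variable (src tgt : E → V)

abbrev Components (S : Finset E) : Type _ := Quotient (Relation.EqvGen.setoid (adjRel src tgt S))

lemma reach_of_adjRel_le {S : Finset E} {r : V → V → Prop} (hr : Equivalence r)
    (hadj : ∀ u v, adjRel src tgt S u v → r u v) {u v : V} (h : reach src tgt S u v) : r u v :=
  hr.eqvGen_iff.mp (h.mono hadj)

lemma inducedEdges_subset (S : Finset E) (X : Finset V) : inducedEdges src tgt S X ⊆ S :=
  filter_subset _ S

lemma reach_inducedEdges {S : Finset E} {X : Finset V} {u v : V}
    (h : reach src tgt (inducedEdges src tgt S X) u v) : u = v ∨ (u ∈ X ∧ v ∈ X) := by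
  refine reach_of_adjRel_le src tgt (r := fun u v => u = v ∨ (u ∈ X ∧ v ∈ X))
    ⟨fun _ => .inl rfl, ?_, ?_⟩ ?_ h
  · rintro _ _ (rfl | ⟨hu, hv⟩)
    exacts [.inl rfl, .inr ⟨hv, hu⟩]
  · rintro _ _ _ (rfl | ⟨hu, hv⟩) (rfl | ⟨hv', hw⟩)
    exacts [.inl rfl, .inr ⟨hv', hw⟩, .inr ⟨hu, hv⟩, .inr ⟨hu, hw⟩]
  · rintro u v ⟨e, he, hends⟩
    obtain ⟨hs, ht⟩ := (mem_filter.mp he).2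
    rcases hends with ⟨rfl, rfl⟩ | ⟨rfl, rfl⟩
    exacts [.inr ⟨hs, ht⟩, .inr ⟨ht, hs⟩]

lemma nComp_empty [Fintype V] : nComp src tgt (∅ : Finset E) = Fintype.card V := by
  have hreach : ∀ u v, reach src tgt (∅ : Finset E) u v → u = v := fun _ _ =>
    reach_of_adjRel_le src tgt eq_equivalence fun _ _ ⟨_, he, _⟩ => absurd he (notMem_empty _)
  have hbij : Function.Bijective (Quotient.mk _ : V → Components src tgt ∅) :=
    ⟨fun u v h => hreach u v (Quotient.exact h), Quotient.mk_surjective⟩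
  rw [nComp, ← Nat.card_eq_of_bijective _ hbij, Nat.card_eq_fintype_card]

lemma mk_eq_mk_of_reach_insert {S : Finset E} {e : E} {u v : V}
    (h : reach src tgt (insert e S) u v) :
    let c : V → Components src tgt S := Quotient.mk _
    c u = c v ∨ (c u ∈ ({c (src e), c (tgt e)} : Set _) ∧ c v ∈ ({c (src e), c (tgt e)} : Set _)) := by
  intro c
  refine reach_of_adjRel_le src tgt (r := fun u v => c u = c v ∨
    (c u ∈ ({c (src e), c (tgt e)} : Set _) ∧ c v ∈ ({c (src e), c (tgt e)} : Set _)))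
    ⟨fun _ => .inl rfl, ?_, ?_⟩ ?_ h
  · rintro _ _ (huv | ⟨hu, hv⟩)
    exacts [.inl huv.symm, .inr ⟨hv, hu⟩]
  · rintro _ _ _ (huv | ⟨hu, hv⟩) (hvw | ⟨hv', hw⟩)
    · exact .inl (huv.trans hvw)
    · exact .inr ⟨huv ▸ hv', hw⟩
    · exact .inr ⟨hu, hvw ▸ hv⟩
    · exact .inr ⟨hu, hw⟩
  · rintro u v ⟨f, hf, hends⟩
    rcases mem_insert.mp hf with rfl | hf
    · rcases hends with ⟨rfl, rfl⟩ | ⟨rfl, rfl⟩ <;> simp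
    · exact .inl (Quotient.sound (Relation.EqvGen.rel _ _ ⟨f, hf, hends⟩))

lemma nComp_le_nComp_insert_add_one [Finite V] (e : E) (S : Finset E) :
    nComp src tgt S ≤ nComp src tgt (insert e S) + 1 := by
  let c : V → Components src tgt S := Quotient.mk _
  let π : Components src tgt S → Components src tgt (insert e S) :=
    Quotient.map' id fun _ _ h => h.mono fun _ _ ⟨f, hf, hends⟩ => ⟨f, mem_insert_of_mem hf, hends⟩
  let g : Components src tgt S → Option (Components src tgt (insert e S)) :=
    fun x => if x = c (src e) then none else some (π x)
  -- the edge `e` only glues the components of `src e` and `tgt e`, and `g` separates these two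
  have hg : Function.Injective g := by
    intro x y hxy
    obtain ⟨a, rfl⟩ := Quotient.mk_surjective x
    obtain ⟨b, rfl⟩ := Quotient.mk_surjective y
    by_cases ha : c a = c (src e) <;> by_cases hb : c b = c (src e)
    · exact ha.trans hb.symm
    all_goals simp [g, c, ha, hb] at hxy
    rcases mk_eq_mk_of_reach_insert src tgt (Quotient.exact hxy) with hab | ⟨ha', hb'⟩
    · exact hab
    · simp only [Set.mem_insert_iff, Set.mem_singleton_iff] at ha' hb'
      exact (ha'.resolve_left ha).trans (hb'.resolve_left hb).symm
  simpa [nComp] using Nat.card_le_card_of_injective g hg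

lemma nComp_add_card_le_insert [Finite V] (e : E) (S : Finset E) :
    nComp src tgt S + S.card ≤ nComp src tgt (insert e S) + (insert e S).card := by
  by_cases he : e ∈ S
  · rw [insert_eq_of_mem he]
  · rw [card_insert_of_notMem he]
    have := nComp_le_nComp_insert_add_one src tgt e S
    omega

lemma nComp_add_card_mono [Finite V] {S' S : Finset E} (h : S' ⊆ S) :
    nComp src tgt S' + S'.card ≤ nComp src tgt S + S.card := by
  rw [← union_eq_right.mpr h]
  clear h
  induction S using Finset.induction_on with
  | empty => simp
  | insert e D _ ih =>
    rw [union_insert]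
    exact ih.trans (nComp_add_card_le_insert src tgt e _)

lemma card_le_nComp_add_card [Fintype V] (S : Finset E) :
    Fintype.card V ≤ nComp src tgt S + S.card := by
  simpa [nComp_empty] using nComp_add_card_mono src tgt (empty_subset S)

end Components

lemma card_add_card_le_nComp_inducedEdges [Fintype V] (src tgt : E → V) (S : Finset E)
    {X Y : Finset V} (hYX : Y ⊆ X)
    (hY : (Y : Set V).Pairwise fun u v => ¬ reach src tgt (inducedEdges src tgt S X) u v) :
    Fintype.card V + Y.card ≤ nComp src tgt (inducedEdges src tgt S X) + X.card := by
  have hinj : Set.InjOn (Quotient.mk _ : V → Components src tgt (inducedEdges src tgt S X))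
      ↑(Xᶜ ∪ Y) := by
    intro u hu v hv huv
    rcases reach_inducedEdges src tgt (Quotient.exact huv) with rfl | ⟨huX, hvX⟩
    · rfl
    have huY : u ∈ Y := by simpa [huX] using hu
    have hvY : v ∈ Y := by simpa [hvX] using hv
    by_contra hne
    exact hY huY hvY hne (Quotient.exact huv)
  have hcard := card_le_card_of_injOn (t := univ) _ (fun _ _ => mem_univ _) hinj
  rw [card_union_of_disjoint (disjoint_compl_left.mono_right hYX), card_univ,
    ← Nat.card_eq_fintype_card] at hcard
  have := card_compl_add_card X
  unfold nComp
  omega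

section Forests

variable (src tgt : E → V) [Fintype V]

def IsForest (S : Finset E) : Prop :=
  nComp src tgt S + S.card = Fintype.card V

variable {src tgt}

lemma IsForest.mono {S S' : Finset E} (hS : IsForest src tgt S) (h : S' ⊆ S) :
    IsForest src tgt S' :=
  le_antisymm (hS ▸ nComp_add_card_mono src tgt h) (card_le_nComp_add_card src tgt S')

lemma IsSpanningTree.isForest {S : Finset E} (h : IsSpanningTree src tgt S) :
    IsForest src tgt S := by
  obtain ⟨hcomp, hcard⟩ := h
  unfold IsForest
  omega

lemma IsSpanning2Forest.isForest {S : Finset E} (h : IsSpanning2Forest src tgt S) :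
    IsForest src tgt S := by
  obtain ⟨hcomp, hcard⟩ := h
  unfold IsForest
  omega

lemma IsForest.card_inducedEdges_add_one_le {S : Finset E} (hS : IsForest src tgt S)
    {X : Finset V} (hX : X.Nonempty) : (inducedEdges src tgt S X).card + 1 ≤ X.card := by
  obtain ⟨x, hx⟩ := hX
  have hcomp := card_add_card_le_nComp_inducedEdges src tgt S (singleton_subset_iff.mpr hx)
    (by simp)
  have hforest := hS.mono (inducedEdges_subset src tgt S X)
  rw [card_singleton] at hcomp
  unfold IsForest at hforest
  omega

lemma IsForest.isTreeOn {S : Finset E} (hS : IsForest src tgt S) {X : Finset V}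
    (hcard : (inducedEdges src tgt S X).card + 1 = X.card) : IsTreeOn src tgt X S := by
  refine ⟨hcard, fun u hu v hv => ?_⟩
  by_contra huv
  have hne : u ≠ v := by rintro rfl; exact huv (Relation.EqvGen.refl u)
  have hpair : ({u, v} : Set V).Pairwise
      fun u v => ¬ reach src tgt (inducedEdges src tgt S X) u v :=
    Set.pairwise_pair.mpr fun _ => ⟨huv, fun h => huv (Relation.EqvGen.symm _ _ h)⟩
  have hcomp := card_add_card_le_nComp_inducedEdges src tgt S
    (insert_subset hu (singleton_subset_iff.mpr hv)) (by rwa [coe_pair])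
  have hforest := hS.mono (inducedEdges_subset src tgt S X)
  rw [card_pair hne] at hcomp
  unfold IsForest at hforest
  omega

end Forests

lemma card_inducedEdges_add_card_inducedEdges (src tgt : E → V) {A B : Finset E}
    (hdisj : Disjoint A B) (X : Finset V) :
    (inducedEdges src tgt A X).card + (inducedEdges src tgt B X).card =
      (inducedEdges src tgt (A ∪ B) X).card := by
  rw [inducedEdges, inducedEdges, inducedEdges, filter_union,
    card_union_of_disjoint (disjoint_filter_filter hdisj)]

theorem stmt_2_general [Fintype V] [Fintype E] (src tgt : E → V)
    (X : Finset V)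
    (hX : (inducedEdges src tgt Finset.univ X).card + 2 = 2 * X.card)
    (A B : Finset E)
    (hAB : (IsSpanning2Forest src tgt A ∧ IsSpanningTree src tgt B) ∨
           (IsSpanningTree src tgt A ∧ IsSpanning2Forest src tgt B))
    (hdisj : Disjoint A B) (hcover : A ∪ B = Finset.univ) :
    IsTreeOn src tgt X A ∧ IsTreeOn src tgt X B := by
  obtain ⟨hA, hB⟩ : IsForest src tgt A ∧ IsForest src tgt B := by
    rcases hAB with ⟨hA, hB⟩ | ⟨hA, hB⟩
    exacts [⟨hA.isForest, hB.isForest⟩, ⟨hA.isForest, hB.isForest⟩]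
  have hXne : X.Nonempty := card_pos.mp (by omega)
  have hsplit := card_inducedEdges_add_card_inducedEdges src tgt hdisj X
  rw [hcover] at hsplit
  have hAX := hA.card_inducedEdges_add_one_le hXne
  have hBX := hB.card_inducedEdges_add_one_le hXne
  exact ⟨hA.isTreeOn (by omega), hB.isTreeOn (by omega)⟩

/-- If the edge set of `G₀` is the disjoint union of a spanning
tree and a spanning 2-forest, and `X` is saturated (the induced subgraph has
exactly `2|X| - 2` edges), then for any pair `(A, B)` of complementary
edge-disjoint spanning 2-forest/spanning tree (in either order), both induced
subgraphs `A[X]` and `B[X]` are spanning trees on `X`. -/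
theorem stmt_2 [Fintype V] [Fintype E] (src tgt : E → V)
    (hconn : nComp src tgt (Finset.univ : Finset E) = 1)
    (hG : ∃ T F : Finset E, IsSpanningTree src tgt T ∧ IsSpanning2Forest src tgt F ∧
      Disjoint T F ∧ T ∪ F = Finset.univ)
    (X : Finset V)
    (hX : (inducedEdges src tgt Finset.univ X).card + 2 = 2 * X.card)
    (A B : Finset E)
    (hAB : (IsSpanning2Forest src tgt A ∧ IsSpanningTree src tgt B) ∨
           (IsSpanningTree src tgt A ∧ IsSpanning2Forest src tgt B))
    (hdisj : Disjoint A B) (hcover : A ∪ B = Finset.univ) :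
    IsTreeOn src tgt X A ∧ IsTreeOn src tgt X B :=
  stmt_2_general src tgt X hX A B hAB hdisj hcover
end

section
/- Let y_1, ..., y_m : U → R_{>0} be functions on a set U, Y(s) = diag(y_1(s), ..., y_m(s)), and let A : U → Mat_{m×m}(R) be bounded. Let M be an h × m real matrix of full rank h whose maximal minors are in {-1, 0, 1}, with at least one nonzero. Then there exist constants c_1, c_2, C > 0 such that c_1 det(M Y(s) M^T) < det(M (Y(s) + A(s)) M^T) < c_2 det(M Y(s) M^T) for all s ∈ U with y_1(s), ..., y_m(s) ≥ C. -/
open Matrix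

/-!
Write `Y = diagonal y` and `G = M Y Mᵀ`; `G` is positive definite because `M` has full row rank.
By the matrix determinant lemma, `det (M (Y + A) Mᵀ) = det G * det (1 + Q A)` with
`Q = Mᵀ G⁻¹ M`. Since `Q Y Q = Q`, the matrix `Y^{1/2} Q Y^{1/2}` is an orthogonal projection,
so `|Q a b| ≤ (y a * y b)^{-1/2} ≤ C⁻¹` once all `y i ≥ C`. Hence the entries of `Q A` are
`O(1/C)`, and by continuity of the determinant `det (1 + Q A)` lies in `(1/2, 3/2)` for large `C`.
-/

namespace Matrix

section EntrywiseNorm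

attribute [local instance] Matrix.normedAddCommGroup

theorem exists_pos_forall_abs_det_one_add_sub_one_lt {n : Type*} [Fintype n] [DecidableEq n]
    {ε : ℝ} (hε : 0 < ε) :
    ∃ δ > 0, ∀ X : Matrix n n ℝ, (∀ i j, |X i j| ≤ δ) → |(1 + X).det - 1| < ε := by
  have hcont : Continuous fun X : Matrix n n ℝ => (1 + X).det :=
    (continuous_const.add continuous_id).matrix_det
  obtain ⟨δ, hδ, hball⟩ := Metric.continuousAt_iff.mp (hcont.continuousAt (x := 0)) ε hε
  refine ⟨δ / 2, half_pos hδ, fun X hX => ?_⟩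
  have hXδ : ‖X‖ < δ :=
    ((norm_le_iff (half_pos hδ).le).mpr hX).trans_lt (half_lt_self hδ)
  simpa [Real.dist_eq] using hball (x := X) (by simpa using hXδ)

end EntrywiseNorm

theorem abs_mul_apply_le {l n o : Type*} [Fintype n] {P : Matrix l n ℝ} {Q : Matrix n o ℝ}
    {a b : ℝ} (hP : ∀ i k, |P i k| ≤ a) (hQ : ∀ k j, |Q k j| ≤ b) (i : l) (j : o) :
    |(P * Q) i j| ≤ Fintype.card n * (a * b) :=
  calc |(P * Q) i j| ≤ ∑ k, |P i k * Q k j| := by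
        rw [mul_apply]; exact Finset.abs_sum_le_sum_abs _ _
    _ ≤ ∑ _k : n, a * b := by
        gcongr with k
        rw [abs_mul]
        exact mul_le_mul (hP i k) (hQ k j) (abs_nonneg _) ((abs_nonneg _).trans (hP i k))
    _ = Fintype.card n * (a * b) := by simp

theorem mul_mul_sq_apply_le_one_of_mul_diagonal_mul_self {n : Type*} [Fintype n] [DecidableEq n]
    {Q : Matrix n n ℝ} (hQ : Q.IsSymm) {y : n → ℝ} (hy : ∀ i, 0 ≤ y i)
    (hQyQ : Q * diagonal y * Q = Q) (a b : n) :
    y a * y b * Q a b ^ 2 ≤ 1 := by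
  have hdiag : Q b b = ∑ k, y k * Q k b ^ 2 := by
    conv_lhs => rw [← hQyQ, mul_apply]
    refine Finset.sum_congr rfl fun k _ => ?_
    rw [mul_diagonal, hQ.apply k b]
    ring
  have hdiag_nonneg : 0 ≤ Q b b :=
    hdiag ▸ Finset.sum_nonneg fun k _ => mul_nonneg (hy k) (sq_nonneg _)
  have hterm : ∀ a, y a * Q a b ^ 2 ≤ Q b b := fun a => by
    rw [hdiag]
    exact Finset.single_le_sum (f := fun k => y k * Q k b ^ 2)
      (fun k _ => mul_nonneg (hy k) (sq_nonneg _)) (Finset.mem_univ a)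
  have hbb : y b * Q b b ≤ 1 := by
    rcases hdiag_nonneg.eq_or_lt with hzero | hpos
    · simp [← hzero]
    · exact le_of_mul_le_mul_right (by nlinarith [hterm b]) hpos
  nlinarith [mul_le_mul_of_nonneg_left (hterm a) (hy b)]

section WeightedProjection

variable {h m : Type*} [Fintype h] [Fintype m] [DecidableEq m]

theorem posDef_mul_diagonal_mul_transpose {M : Matrix h m ℝ} (hM : M.rank = Fintype.card h)
    {y : m → ℝ} (hy : ∀ i, 0 < y i) :
    (M * diagonal y * Mᵀ).PosDef := by
  have hinj : Function.Injective M.vecMul := by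
    rw [vecMul_injective_iff, linearIndependent_iff_card_eq_finrank_span, ← hM,
      rank_eq_finrank_span_row, Set.finrank]
  simpa using (posDef_diagonal_iff.mpr hy).mul_mul_conjTranspose_same hinj

variable [DecidableEq h]

theorem isSymm_transpose_mul_inv_mul (M : Matrix h m ℝ) (y : m → ℝ) :
    (Mᵀ * (M * diagonal y * Mᵀ)⁻¹ * M).IsSymm := by
  simp [IsSymm, transpose_nonsing_inv, Matrix.mul_assoc]

theorem transpose_mul_inv_mul_diagonal_mul_self {M : Matrix h m ℝ} {y : m → ℝ}
    (hG : IsUnit (M * diagonal y * Mᵀ).det) :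
    Mᵀ * (M * diagonal y * Mᵀ)⁻¹ * M * diagonal y * (Mᵀ * (M * diagonal y * Mᵀ)⁻¹ * M) =
      Mᵀ * (M * diagonal y * Mᵀ)⁻¹ * M :=
  calc _ = Mᵀ * ((M * diagonal y * Mᵀ)⁻¹ * (M * diagonal y * Mᵀ)) *
        (M * diagonal y * Mᵀ)⁻¹ * M := by simp only [Matrix.mul_assoc]
    _ = _ := by rw [nonsing_inv_mul _ hG, Matrix.mul_one]

theorem abs_transpose_mul_inv_mul_apply_le {M : Matrix h m ℝ} (hM : M.rank = Fintype.card h)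
    {y : m → ℝ} {C : ℝ} (hC : 0 < C) (hy : ∀ i, C ≤ y i) (a b : m) :
    |(Mᵀ * (M * diagonal y * Mᵀ)⁻¹ * M) a b| ≤ C⁻¹ := by
  set Q := Mᵀ * (M * diagonal y * Mᵀ)⁻¹ * M
  have hy0 : ∀ i, 0 < y i := fun i => hC.trans_le (hy i)
  have hG := posDef_mul_diagonal_mul_transpose hM hy0
  have hQ := mul_mul_sq_apply_le_one_of_mul_diagonal_mul_self
    (isSymm_transpose_mul_inv_mul M y) (fun i => (hy0 i).le)
    (transpose_mul_inv_mul_diagonal_mul_self hG.det_pos.ne'.isUnit) a b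
  have hCC : C * C * Q a b ^ 2 ≤ 1 :=
    (mul_le_mul_of_nonneg_right (mul_le_mul (hy a) (hy b) hC.le (hy0 a).le) (sq_nonneg _)).trans
      hQ
  rw [← one_div, le_div_iff₀ hC]
  nlinarith [abs_nonneg (Q a b), sq_abs (Q a b)]

end WeightedProjection

end Matrix

theorem stmt_12_general {U : Type*} {m h : ℕ}
    (y : Fin m → U → ℝ)
    (A : U → Matrix (Fin m) (Fin m) ℝ) (hA : ∃ K : ℝ, ∀ s i j, |A s i j| ≤ K)
    (M : Matrix (Fin h) (Fin m) ℝ) (hrank : M.rank = h) :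
    ∃ c₁ c₂ C : ℝ, 0 < c₁ ∧ 0 < c₂ ∧ 0 < C ∧ ∀ s : U, (∀ i, C ≤ y i s) →
      c₁ * (M * Matrix.diagonal (fun i => y i s) * Mᵀ).det <
          (M * (Matrix.diagonal (fun i => y i s) + A s) * Mᵀ).det ∧
        (M * (Matrix.diagonal (fun i => y i s) + A s) * Mᵀ).det <
          c₂ * (M * Matrix.diagonal (fun i => y i s) * Mᵀ).det := by
  obtain ⟨K, hK⟩ := hA
  obtain ⟨δ, hδ, hdet⟩ := exists_pos_forall_abs_det_one_add_sub_one_lt (n := Fin m) one_half_pos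
  set C := (m * |K| + 1) / δ with hCdef
  have hC : 0 < C := by positivity
  refine ⟨1 / 2, 2, C, by norm_num, by norm_num, hC, fun s hs => ?_⟩
  have hrank' : M.rank = Fintype.card (Fin h) := by rw [hrank, Fintype.card_fin]
  set G := M * diagonal (fun i => y i s) * Mᵀ
  have hG : 0 < G.det :=
    (posDef_mul_diagonal_mul_transpose hrank' fun i => hC.trans_le (hs i)).det_pos
  have hsplit : (M * (diagonal (fun i => y i s) + A s) * Mᵀ).det =
      G.det * (1 + Mᵀ * G⁻¹ * M * A s).det := by
    rw [Matrix.mul_add, Matrix.add_mul, det_add_mul (M * A s) Mᵀ hG.ne'.isUnit,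
      Matrix.mul_assoc (Mᵀ * G⁻¹)]
  have hsmall : ∀ i j, |(Mᵀ * G⁻¹ * M * A s) i j| ≤ δ := fun i j => by
    refine (abs_mul_apply_le (abs_transpose_mul_inv_mul_apply_le hrank' hC hs)
      (fun k l => (hK s k l).trans (le_abs_self K)) i j).trans ?_
    rw [Fintype.card_fin, hCdef, inv_div]
    field_simp
    nlinarith [abs_nonneg K]
  have hnear := abs_sub_lt_iff.mp (hdet _ hsmall)
  rw [hsplit]
  constructor <;> nlinarith

/-- For positive functions `y_i : U → ℝ`, a bounded matrix-valued
map `A : U → Mat_{m×m}(ℝ)`, and an `h × m` real matrix `M` of full rank `h`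
whose maximal minors lie in `{-1, 0, 1}` with at least one nonzero, there are
constants `c₁, c₂, C > 0` with
`c₁ det(M Y Mᵀ) < det(M (Y + A) Mᵀ) < c₂ det(M Y Mᵀ)` whenever all `y_i ≥ C`. -/
theorem stmt_12 {U : Type*} {m h : ℕ}
    (y : Fin m → U → ℝ) (hy : ∀ i s, 0 < y i s)
    (A : U → Matrix (Fin m) (Fin m) ℝ) (hA : ∃ K : ℝ, ∀ s i j, |A s i j| ≤ K)
    (M : Matrix (Fin h) (Fin m) ℝ) (hrank : M.rank = h)
    (hminor : ∀ g : Fin h → Fin m, (M.submatrix id g).det ∈ ({-1, 0, 1} : Set ℝ))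
    (hnz : ∃ g : Fin h → Fin m, (M.submatrix id g).det ≠ 0) :
    ∃ c₁ c₂ C : ℝ, 0 < c₁ ∧ 0 < c₂ ∧ 0 < C ∧ ∀ s : U, (∀ i, C ≤ y i s) →
      c₁ * (M * Matrix.diagonal (fun i => y i s) * Mᵀ).det <
          (M * (Matrix.diagonal (fun i => y i s) + A s) * Mᵀ).det ∧
        (M * (Matrix.diagonal (fun i => y i s) + A s) * Mᵀ).det <
          c₂ * (M * Matrix.diagonal (fun i => y i s) * Mᵀ).det :=
  stmt_12_general y A hA M hrank
end

section
/- (Main theorem) Let G be a connected graph with cycle basis matrix M (h × m) and extended matrix N ((h+1) × m) incorporating ω with ∂ω = p. Let y_1, ..., y_m : U → R_{>0} and let A : U → Mat_{m×m}(R) be bounded such that M(Y+A)M^T and N(Y+A)N^T are invertible on U (Y = diag(y_i)). Then there exist constants c, C > 0 such that |det(N(Y+A)N^T)/det(M(Y+A)M^T) − det(N Y N^T)/det(M Y M^T)| ≤ c at every point s ∈ U with y_1(s), ..., y_m(s) ≥ C. -/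
open Finset Matrix
open scoped Classical

variable {V E : Type*}

/-- The boundary map `∂ : R^E → R^V`, `e ↦ head(e) - tail(e)`. -/
noncomputable def bnd {R : Type*} [Ring R] [Fintype E] (src tgt : E → V) (ω : E → R) : V → R :=
  fun v => ∑ e, ω e * ((if tgt e = v then (1 : R) else 0) - (if src e = v then (1 : R) else 0))

/-- The rows of `M` form an integral basis of `H₁(G, ℤ) = ker (∂ : ℤ^E → ℤ^V)`. -/
def IsCycleBasis [Fintype E] {h : ℕ} (src tgt : E → V) (M : Fin h → E → ℤ) : Prop :=
  (∀ i, bnd src tgt (M i) = 0) ∧ LinearIndependent ℤ M ∧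
    ∀ x : E → ℤ, bnd src tgt x = 0 → x ∈ Submodule.span ℤ (Set.range M)

/-- The real matrix with the same entries as the integer matrix `M`. -/
noncomputable def rmat {h : ℕ} (M : Fin h → E → ℤ) : Matrix (Fin h) E ℝ :=
  Matrix.of fun i e => (M i e : ℝ)

/-
Write `W` for the real cycle matrix and `Y = diag y`. For `K = W X Wᵀ` invertible, the block
determinant formula gives `det (N X Nᵀ) / det K = ω ⬝ S(X) ω` with `S(X) = X - X Wᵀ K⁻¹ W X`.
Since `S(X) Wᵀ = 0 = W S(X)`, `ω` may be replaced by the residual `r = ω - Wᵀ x₀`, where `x₀` solves the unperturbed system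
`W Y Wᵀ x₀ = W Y ω`. Then `W Y r = 0`, and the difference of the two ratios collapses to
`r ⬝ (A - A Wᵀ (W (Y + A) Wᵀ)⁻¹ W A) r`.

Each factor is bounded uniformly once `min y` is large. By Cramer's rule and Cauchy–Binet, every
coordinate of `x₀` is a ratio of two sums of products of minors, weighted by the same nonnegative
monomials in `y`, so it is bounded independently of `y`; hence so is `r`. And `W (Y + A) Wᵀ` is
coercive as soon as `min y` dominates `‖A‖` and the norm of a left inverse of `Wᵀ`, so its inverse
is bounded.
-/

namespace Matrix

section CauchyBinet

variable {R : Type*} [CommRing R] [Fintype E] {k : ℕ}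

theorem det_mul_eq_sum_prod_mul_det_submatrix (A : Matrix (Fin k) E R) (B : Matrix E (Fin k) R) :
    (A * B).det = ∑ p : Fin k → E, (∏ i, B (p i) i) * (A.submatrix id p).det := by
  simp only [det_apply', mul_apply, prod_univ_sum, Fintype.piFinset_univ, mul_sum]
  rw [Finset.sum_comm]
  refine sum_congr rfl fun p _ => sum_congr rfl fun σ _ => ?_
  simp only [submatrix_apply, id, prod_mul_distrib]
  ring

theorem factorial_mul_det_mul (A : Matrix (Fin k) E R) (B : Matrix E (Fin k) R) :
    (k.factorial : R) * (A * B).det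
      = ∑ p : Fin k → E, (A.submatrix id p).det * (B.submatrix p id).det := by
  have hσ : ∀ σ : Equiv.Perm (Fin k), (A * B).det
      = ∑ p : Fin k → E, (A.submatrix id p).det * (σ.sign * ∏ i, B (p (σ i)) i) := by
    intro σ
    rw [det_mul_eq_sum_prod_mul_det_submatrix,
      ← (Equiv.arrowCongr σ.symm (Equiv.refl E)).sum_comp]
    refine sum_congr rfl fun p _ => ?_
    have hp : Equiv.arrowCongr σ.symm (Equiv.refl E) p = p ∘ σ := rfl
    have hA : A.submatrix id (p ∘ σ) = (A.submatrix id p).submatrix id σ := rfl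
    rw [hp, hA, det_permute']
    simp only [Function.comp_apply]
    ring
  calc (k.factorial : R) * (A * B).det = ∑ σ : Equiv.Perm (Fin k), (A * B).det := by
        rw [sum_const, card_univ, Fintype.card_perm, Fintype.card_fin, nsmul_eq_mul]
    _ = ∑ p : Fin k → E, (A.submatrix id p).det
          * ∑ σ : Equiv.Perm (Fin k), σ.sign * ∏ i, B (p (σ i)) i := by
        simp only [mul_sum]
        rw [Finset.sum_comm]
        exact sum_congr rfl fun σ _ => hσ σ
    _ = _ := by simp only [det_apply', submatrix_apply, id]

theorem det_submatrix_mul_diagonal [DecidableEq E] (W : Matrix (Fin k) E R) (d : E → R)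
    (p : Fin k → E) :
    ((W * diagonal d).submatrix id p).det = (W.submatrix id p).det * ∏ i, d (p i) := by
  have : (W * diagonal d).submatrix id p = W.submatrix id p * diagonal (d ∘ p) := by
    ext i j
    simp [mul_diagonal]
  rw [this, det_mul, det_diagonal]
  rfl

theorem factorial_mul_det_mul_diagonal_mul_transpose [DecidableEq E] (W C : Matrix (Fin k) E R)
    (d : E → R) :
    (k.factorial : R) * (W * diagonal d * Cᵀ).det
      = ∑ p : Fin k → E, (W.submatrix id p).det * (C.submatrix id p).det * ∏ i, d (p i) := by
  rw [factorial_mul_det_mul]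
  refine sum_congr rfl fun p _ => ?_
  rw [det_submatrix_mul_diagonal, ← transpose_submatrix, det_transpose]
  ring

theorem exists_abs_det_mul_diagonal_mul_transpose_le [DecidableEq E]
    (W C : Matrix (Fin k) E ℝ) :
    ∃ β, 0 ≤ β ∧ ∀ d : E → ℝ, (∀ e, 0 ≤ d e) →
      |(W * diagonal d * Cᵀ).det| ≤ β * (W * diagonal d * Wᵀ).det := by
  set ratio := fun p : Fin k → E => |(C.submatrix id p).det| / |(W.submatrix id p).det|
  have hratio : ∀ p, 0 ≤ ratio p := fun p => by positivity
  refine ⟨∑ p, ratio p, sum_nonneg fun p _ => hratio p, fun d hd => ?_⟩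
  have hfac : (0 : ℝ) < k.factorial := by positivity
  refine le_of_mul_le_mul_left ?_ hfac
  rw [← abs_of_pos hfac, ← abs_mul, abs_of_pos hfac, mul_left_comm,
    factorial_mul_det_mul_diagonal_mul_transpose, factorial_mul_det_mul_diagonal_mul_transpose,
    mul_sum]
  refine (abs_sum_le_sum_abs _ _).trans (sum_le_sum fun p _ => ?_)
  have hd : 0 ≤ ∏ i, d (p i) := prod_nonneg fun i _ => hd _
  -- `x / 0 = 0` makes this hold also when the minor of `W` vanishes.
  have hterm : |(W.submatrix id p).det * (C.submatrix id p).det * ∏ i, d (p i)|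
      = ratio p * ((W.submatrix id p).det * (W.submatrix id p).det * ∏ i, d (p i)) := by
    rcases eq_or_ne (W.submatrix id p).det 0 with h0 | h0
    · simp [h0]
    · rw [abs_mul, abs_mul, abs_of_nonneg hd, ← abs_mul_abs_self (W.submatrix id p).det]
      simp only [ratio]
      field_simp
  rw [hterm]
  exact mul_le_mul_of_nonneg_right (single_le_sum (fun p _ => hratio p) (mem_univ p))
    (mul_nonneg (mul_self_nonneg _) hd)

theorem inv_mulVec_apply_eq_det_updateCol_div {F : Type*} [Field F] (K : Matrix (Fin k) (Fin k) F)
    (b : Fin k → F) (i : Fin k) :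
    (K⁻¹ *ᵥ b) i = (K.updateCol i b).det / K.det := by
  rw [inv_def, Ring.inverse_eq_inv', smul_mulVec, ← cramer_eq_adjugate_mulVec, Pi.smul_apply,
    cramer_apply, smul_eq_mul, div_eq_inv_mul]

theorem updateCol_mul_diagonal_mul_transpose [DecidableEq E] (W : Matrix (Fin k) E R)
    (d ω : E → R) (i : Fin k) :
    (W * diagonal d * Wᵀ).updateCol i ((W * diagonal d) *ᵥ ω)
      = W * diagonal d * (W.updateRow i ω)ᵀ := by
  ext a j
  rcases eq_or_ne j i with rfl | hj
  · simp [mulVec, dotProduct, mul_apply]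
  · simp [updateCol_ne hj, mul_apply, updateRow_ne hj]

theorem exists_norm_inv_mulVec_le [DecidableEq E] (W : Matrix (Fin k) E ℝ) (ω : E → ℝ) :
    ∃ B, 0 ≤ B ∧ ∀ d : E → ℝ, (∀ e, 0 ≤ d e) →
      ‖(W * diagonal d * Wᵀ)⁻¹ *ᵥ ((W * diagonal d) *ᵥ ω)‖ ≤ B := by
  choose β hβ0 hβ using fun i => exists_abs_det_mul_diagonal_mul_transpose_le W (W.updateRow i ω)
  refine ⟨∑ i, β i, sum_nonneg fun i _ => hβ0 i, fun d hd =>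
    (pi_norm_le_iff_of_nonneg (sum_nonneg fun i _ => hβ0 i)).2 fun i => ?_⟩
  rw [Real.norm_eq_abs, inv_mulVec_apply_eq_det_updateCol_div, updateCol_mul_diagonal_mul_transpose,
    abs_div]
  refine (div_le_of_le_mul₀ (abs_nonneg _) (hβ0 i) ((hβ i d hd).trans ?_)).trans
    (single_le_sum (fun i _ => hβ0 i) (mem_univ i))
  exact mul_le_mul_of_nonneg_left (le_abs_self _) (hβ0 i)

end CauchyBinet

section Schur

variable {R : Type*} [CommRing R] [Fintype E] {k : ℕ}

noncomputable def schurCompl (W : Matrix (Fin k) E R) (X : Matrix E E R) : Matrix E E R :=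
  X - X * Wᵀ * (W * X * Wᵀ)⁻¹ * W * X

theorem replicateRow_mul_mul_transpose_apply (ω : E → R) (P : Matrix E E R) (a b : Fin 1) :
    (replicateRow (Fin 1) ω * P * (replicateRow (Fin 1) ω)ᵀ) a b = ω ⬝ᵥ (P *ᵥ ω) := by
  simp only [mul_apply, replicateRow_apply, transpose_apply, dotProduct, mulVec, sum_mul, mul_sum,
    mul_assoc]
  exact sum_comm

theorem det_bordered_mul_mul_transpose (N : Matrix (Fin (k + 1)) E R) (W : Matrix (Fin k) E R)
    (ω : E → R) (hN1 : ∀ i : Fin k, N i.castSucc = W i) (hN2 : N (Fin.last k) = ω)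
    (X : Matrix E E R) (hK : IsUnit (W * X * Wᵀ).det) :
    (N * X * Nᵀ).det = (W * X * Wᵀ).det * (ω ⬝ᵥ (schurCompl W X *ᵥ ω)) := by
  have hN : N.submatrix finSumFinEquiv id = fromRows W (replicateRow (Fin 1) ω) := by
    ext (i | i) e
    · simp [← hN1]; rfl
    · simp [Fin.fin_one_eq_zero i, ← hN2]; rfl
  have : Invertible (W * X * Wᵀ) := invertibleOfIsUnitDet _ hK
  rw [← det_submatrix_equiv_self finSumFinEquiv,
    show (N * X * Nᵀ).submatrix finSumFinEquiv finSumFinEquiv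
      = N.submatrix finSumFinEquiv id * X * (N.submatrix finSumFinEquiv id)ᵀ from rfl,
    hN, transpose_fromRows, fromRows_mul, fromRows_mul_fromCols, det_fromBlocks₁₁,
    invOf_eq_nonsing_inv, det_fin_one]
  congr 1
  rw [← replicateRow_mul_mul_transpose_apply ω _ 0 0]
  simp only [schurCompl, Matrix.mul_sub, Matrix.sub_mul, Matrix.mul_assoc]

theorem dotProduct_mul_mul_transpose_mulVec {ι : Type*} [Fintype ι] (W : Matrix ι E R)
    (X : Matrix E E R) (x : ι → R) :
    x ⬝ᵥ ((W * X * Wᵀ) *ᵥ x) = (Wᵀ *ᵥ x) ⬝ᵥ (X *ᵥ (Wᵀ *ᵥ x)) := by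
  have hx : x ᵥ* W = Wᵀ *ᵥ x := by simpa using vecMul_transpose Wᵀ x
  rw [← mulVec_mulVec, ← mulVec_mulVec, dotProduct_mulVec x W, hx]

variable {W : Matrix (Fin k) E R} {X : Matrix E E R}

theorem schurCompl_mul_transpose (hK : IsUnit (W * X * Wᵀ).det) : schurCompl W X * Wᵀ = 0 := by
  have hinv : (W * (X * Wᵀ))⁻¹ * (W * (X * Wᵀ)) = 1 :=
    nonsing_inv_mul _ (by rwa [← Matrix.mul_assoc])
  simp only [schurCompl, Matrix.sub_mul, Matrix.mul_assoc, hinv, Matrix.mul_one, sub_self]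

theorem mul_schurCompl (hK : IsUnit (W * X * Wᵀ).det) : W * schurCompl W X = 0 := by
  simp only [schurCompl, Matrix.mul_sub, ← Matrix.mul_assoc, mul_nonsing_inv _ hK, Matrix.one_mul,
    sub_self]

theorem dotProduct_schurCompl_mulVec_sub (hK : IsUnit (W * X * Wᵀ).det) (ω : E → R)
    (a : Fin k → R) :
    (ω - Wᵀ *ᵥ a) ⬝ᵥ (schurCompl W X *ᵥ (ω - Wᵀ *ᵥ a)) = ω ⬝ᵥ (schurCompl W X *ᵥ ω) := by
  have hright : schurCompl W X *ᵥ (Wᵀ *ᵥ a) = 0 := by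
    rw [mulVec_mulVec, schurCompl_mul_transpose hK, zero_mulVec]
  have hleft : (Wᵀ *ᵥ a) ⬝ᵥ (schurCompl W X *ᵥ ω) = 0 := by
    rw [← vecMul_transpose, transpose_transpose, ← dotProduct_mulVec, mulVec_mulVec,
      mul_schurCompl hK, zero_mulVec, dotProduct_zero]
  rw [mulVec_sub, hright, sub_zero, sub_dotProduct, hleft, sub_zero]

noncomputable def residual (W : Matrix (Fin k) E R) (X : Matrix E E R) (ω : E → R) : E → R :=
  ω - Wᵀ *ᵥ ((W * X * Wᵀ)⁻¹ *ᵥ ((W * X) *ᵥ ω))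

theorem mul_mulVec_residual (hK : IsUnit (W * X * Wᵀ).det) (ω : E → R) :
    (W * X) *ᵥ residual W X ω = 0 := by
  have : X *ᵥ residual W X ω = schurCompl W X *ᵥ ω := by
    simp only [residual, schurCompl, sub_mulVec, mulVec_sub, mulVec_mulVec, Matrix.mul_assoc]
  rw [← mulVec_mulVec, this, mulVec_mulVec, mul_schurCompl hK, zero_mulVec]

theorem dotProduct_schurCompl_add_mulVec_sub {D : Matrix E E R} (hD : Dᵀ = D) (A : Matrix E E R)
    {r : E → R} (hr : (W * D) *ᵥ r = 0) :
    r ⬝ᵥ (schurCompl W (D + A) *ᵥ r) - r ⬝ᵥ (schurCompl W D *ᵥ r)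
      = r ⬝ᵥ ((A - A * Wᵀ * (W * (D + A) * Wᵀ)⁻¹ * W * A) *ᵥ r) := by
  have hl : r ᵥ* (D * Wᵀ) = 0 := by
    rw [← hD, ← transpose_mul, vecMul_transpose, hr]
  have hleft : ∀ Y : Matrix (Fin k) E R, r ⬝ᵥ ((D * Wᵀ * Y) *ᵥ r) = 0 := fun Y => by
    rw [dotProduct_mulVec, ← vecMul_vecMul, hl, zero_vecMul, zero_dotProduct]
  have hright : ∀ Y : Matrix E (Fin k) R, r ⬝ᵥ ((Y * (W * D)) *ᵥ r) = 0 := fun Y => by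
    rw [← mulVec_mulVec, hr, mulVec_zero, dotProduct_zero]
  have hsplit : schurCompl W (D + A) - schurCompl W D
      = (A - A * Wᵀ * (W * (D + A) * Wᵀ)⁻¹ * W * A)
        + (D * Wᵀ * ((W * D * Wᵀ)⁻¹ * W * D - (W * (D + A) * Wᵀ)⁻¹ * W * (D + A))
          - A * Wᵀ * (W * (D + A) * Wᵀ)⁻¹ * (W * D)) := by
    simp only [schurCompl, Matrix.mul_add, Matrix.add_mul, Matrix.mul_sub, Matrix.mul_assoc]
    abel
  rw [← dotProduct_sub, ← sub_mulVec, hsplit, add_mulVec, dotProduct_add, add_eq_left, sub_mulVec,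
    dotProduct_sub, hleft, hright, sub_zero]

theorem dotProduct_schurCompl_add_mulVec_sub_eq {D : Matrix E E R} (hD : Dᵀ = D)
    (A : Matrix E E R) (hK₀ : IsUnit (W * D * Wᵀ).det) (hK₁ : IsUnit (W * (D + A) * Wᵀ).det)
    (ω : E → R) :
    ω ⬝ᵥ (schurCompl W (D + A) *ᵥ ω) - ω ⬝ᵥ (schurCompl W D *ᵥ ω)
      = residual W D ω ⬝ᵥ ((A - A * Wᵀ * (W * (D + A) * Wᵀ)⁻¹ * W * A) *ᵥ residual W D ω) := by
  rw [← dotProduct_schurCompl_add_mulVec_sub hD A (mul_mulVec_residual hK₀ ω), residual,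
    dotProduct_schurCompl_mulVec_sub hK₁, dotProduct_schurCompl_mulVec_sub hK₀]

end Schur

section Bounds

attribute [local instance] Matrix.linftyOpNormedAddCommGroup Matrix.linftyOpNormedSpace

variable {ι κ : Type*} [Fintype ι] [Fintype κ]

theorem abs_dotProduct_le (u v : ι → ℝ) : |u ⬝ᵥ v| ≤ Fintype.card ι * ‖u‖ * ‖v‖ := by
  calc |u ⬝ᵥ v| ≤ ∑ i, |u i| * |v i| := by
        simpa only [dotProduct, abs_mul] using abs_sum_le_sum_abs (fun i => u i * v i) univ
    _ ≤ ∑ _i : ι, ‖u‖ * ‖v‖ := sum_le_sum fun i _ =>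
        mul_le_mul (norm_le_pi_norm u i) (norm_le_pi_norm v i) (abs_nonneg _) (norm_nonneg _)
    _ = Fintype.card ι * ‖u‖ * ‖v‖ := by rw [sum_const, card_univ, nsmul_eq_mul, mul_assoc]

theorem abs_dotProduct_mulVec_le (u : ι → ℝ) (M : Matrix ι κ ℝ) (v : κ → ℝ) :
    |u ⬝ᵥ (M *ᵥ v)| ≤ Fintype.card ι * ‖u‖ * ‖M‖ * ‖v‖ := by
  rw [mul_assoc _ ‖M‖]
  exact (abs_dotProduct_le u _).trans (by gcongr; exact linfty_opNorm_mulVec M v)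

theorem sq_norm_le_dotProduct_self (v : ι → ℝ) : ‖v‖ ^ 2 ≤ v ⬝ᵥ v := by
  have hvv : 0 ≤ v ⬝ᵥ v := sum_nonneg fun i _ => mul_self_nonneg (v i)
  have hv : ‖v‖ ≤ √(v ⬝ᵥ v) := (pi_norm_le_iff_of_nonneg (Real.sqrt_nonneg _)).2 fun i =>
    Real.abs_le_sqrt <| by
      rw [sq]
      exact single_le_sum (f := fun j => v j * v j) (fun j _ => mul_self_nonneg _) (mem_univ i)
  calc ‖v‖ ^ 2 ≤ √(v ⬝ᵥ v) ^ 2 := by gcongr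
    _ = v ⬝ᵥ v := Real.sq_sqrt hvv

theorem linfty_opNorm_le_of_forall_mulVec_le (A : Matrix ι κ ℝ) {c : ℝ} (hc : 0 ≤ c)
    (h : ∀ v, ‖A *ᵥ v‖ ≤ c * ‖v‖) : ‖A‖ ≤ c := by
  rw [linfty_opNorm_eq_opNorm]
  exact ContinuousLinearMap.opNorm_le_bound _ hc h

theorem linfty_opNorm_le_of_abs_le (A : Matrix ι κ ℝ) {K : ℝ} (hK : 0 ≤ K)
    (h : ∀ i j, |A i j| ≤ K) : ‖A‖ ≤ Fintype.card κ * K := by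
  refine linfty_opNorm_le_of_forall_mulVec_le A (by positivity) fun v =>
    (pi_norm_le_iff_of_nonneg (by positivity)).2 fun i => ?_
  calc ‖(A *ᵥ v) i‖ = |A i ⬝ᵥ v| := rfl
    _ ≤ ∑ _j : κ, K * ‖v‖ := by
      refine (abs_sum_le_sum_abs _ _).trans (sum_le_sum fun j _ => ?_)
      rw [abs_mul]
      exact mul_le_mul (h i j) (norm_le_pi_norm v j) (abs_nonneg _) hK
    _ = Fintype.card κ * K * ‖v‖ := by rw [sum_const, card_univ, nsmul_eq_mul, mul_assoc]

theorem isUnit_det_of_coercive [DecidableEq ι] {K : Matrix ι ι ℝ}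
    (hK : ∀ x, ‖x‖ ^ 2 ≤ x ⬝ᵥ (K *ᵥ x)) : IsUnit K.det := by
  rw [isUnit_iff_ne_zero, Ne, ← exists_mulVec_eq_zero_iff]
  rintro ⟨v, hv, hKv⟩
  have := hK v
  rw [hKv, dotProduct_zero] at this
  exact hv (norm_eq_zero.1 (pow_eq_zero_iff two_ne_zero |>.1 (le_antisymm this (by positivity))))

theorem linfty_opNorm_inv_le_of_coercive [DecidableEq ι] {K : Matrix ι ι ℝ}
    (hK : ∀ x, ‖x‖ ^ 2 ≤ x ⬝ᵥ (K *ᵥ x)) : ‖K⁻¹‖ ≤ Fintype.card ι := by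
  refine linfty_opNorm_le_of_forall_mulVec_le _ (Nat.cast_nonneg _) fun v => ?_
  set w := K⁻¹ *ᵥ v
  have hKw : K *ᵥ w = v := by
    rw [mulVec_mulVec, mul_nonsing_inv _ (isUnit_det_of_coercive hK), one_mulVec]
  have h : ‖w‖ * ‖w‖ ≤ ‖w‖ * (Fintype.card ι * ‖v‖) :=
    calc ‖w‖ * ‖w‖ = ‖w‖ ^ 2 := (sq _).symm
      _ ≤ w ⬝ᵥ v := hKw ▸ hK w
      _ ≤ |w ⬝ᵥ v| := le_abs_self _
      _ ≤ ‖w‖ * (Fintype.card ι * ‖v‖) := by linarith [abs_dotProduct_le w v]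
  rcases (norm_nonneg w).eq_or_lt with h0 | h0
  · rw [← h0]; positivity
  · exact le_of_mul_le_mul_left h h0

theorem coercive_mul_mul_transpose [DecidableEq κ] {W L : Matrix κ ι ℝ} (hLW : L * Wᵀ = 1)
    {X : Matrix ι ι ℝ} (hX : ∀ g, ‖L‖ ^ 2 * ‖g‖ ^ 2 ≤ g ⬝ᵥ (X *ᵥ g)) (x : κ → ℝ) :
    ‖x‖ ^ 2 ≤ x ⬝ᵥ ((W * X * Wᵀ) *ᵥ x) := by
  have hx : L *ᵥ (Wᵀ *ᵥ x) = x := by rw [mulVec_mulVec, hLW, one_mulVec]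
  calc ‖x‖ ^ 2 ≤ ‖L‖ ^ 2 * ‖Wᵀ *ᵥ x‖ ^ 2 := by
        rw [← mul_pow]; gcongr; conv_lhs => rw [← hx]
        exact linfty_opNorm_mulVec L _
    _ ≤ (Wᵀ *ᵥ x) ⬝ᵥ (X *ᵥ (Wᵀ *ᵥ x)) := hX _
    _ = x ⬝ᵥ ((W * X * Wᵀ) *ᵥ x) := (dotProduct_mul_mul_transpose_mulVec W X x).symm

theorem le_dotProduct_diagonal_add_mulVec [DecidableEq ι] {C : ℝ} (hC : 0 ≤ C) {d : ι → ℝ}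
    (hd : ∀ i, C ≤ d i) (A : Matrix ι ι ℝ) (g : ι → ℝ) :
    (C - Fintype.card ι * ‖A‖) * ‖g‖ ^ 2 ≤ g ⬝ᵥ ((diagonal d + A) *ᵥ g) := by
  have hD : C * (g ⬝ᵥ g) ≤ g ⬝ᵥ (diagonal d *ᵥ g) := by
    simp only [dotProduct, mulVec_diagonal, mul_sum]
    exact sum_le_sum fun i _ => by nlinarith [hd i, mul_self_nonneg (g i)]
  have hA := neg_abs_le (g ⬝ᵥ (A *ᵥ g))
  have hAg := abs_dotProduct_mulVec_le g A g
  have hg := sq_norm_le_dotProduct_self g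
  rw [add_mulVec, dotProduct_add]
  nlinarith [mul_le_mul_of_nonneg_left hg hC]

theorem norm_sub_mul_mul_mul_mul_le (A : Matrix ι ι ℝ) (W : Matrix κ ι ℝ) (Q : Matrix κ κ ℝ) :
    ‖A - A * Wᵀ * Q * W * A‖ ≤ ‖A‖ + ‖A‖ * ‖Wᵀ‖ * ‖Q‖ * ‖W‖ * ‖A‖ := by
  refine (norm_sub_le _ _).trans (add_le_add le_rfl ?_)
  refine (linfty_opNorm_mul _ _).trans ?_
  gcongr
  refine (linfty_opNorm_mul _ _).trans ?_
  gcongr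
  refine (linfty_opNorm_mul _ _).trans ?_
  gcongr
  exact linfty_opNorm_mul _ _

theorem isUnit_det_mul_transpose_of_isUnit_det [DecidableEq ι] (W : Matrix ι κ ℝ) (X : Matrix κ κ ℝ)
    (h : IsUnit (W * X * Wᵀ).det) : IsUnit (W * Wᵀ).det := by
  rw [isUnit_iff_ne_zero, Ne, ← exists_mulVec_eq_zero_iff]
  rintro ⟨v, hv, hWv⟩
  have hWtv : Wᵀ *ᵥ v = 0 := by
    have := dotProduct_mul_mul_transpose_mulVec W 1 v
    rwa [Matrix.mul_one, one_mulVec, hWv, dotProduct_zero, eq_comm, dotProduct_self_eq_zero]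
      at this
  refine h.ne_zero (exists_mulVec_eq_zero_iff.1 ⟨v, hv, ?_⟩)
  rw [← mulVec_mulVec, hWtv, mulVec_zero]

variable [Fintype E] {k : ℕ}

theorem coercive_mul_diagonal_add_mul_transpose [DecidableEq E] {W L : Matrix (Fin k) E ℝ}
    (hLW : L * Wᵀ = 1) {d : E → ℝ} (A : Matrix E E ℝ)
    (hd : ∀ e, ‖L‖ ^ 2 + Fintype.card E * ‖A‖ ≤ d e) (x : Fin k → ℝ) :
    ‖x‖ ^ 2 ≤ x ⬝ᵥ ((W * (diagonal d + A) * Wᵀ) *ᵥ x) := by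
  refine coercive_mul_mul_transpose hLW (fun g => ?_) x
  have := le_dotProduct_diagonal_add_mulVec (by positivity) hd A g
  rwa [add_sub_cancel_right] at this

theorem exists_abs_dotProduct_schurCompl_diagonal_add_sub_le [DecidableEq E]
    (W : Matrix (Fin k) E ℝ) (hW : IsUnit (W * Wᵀ).det) (ω : E → ℝ) (K : ℝ) :
    ∃ c C : ℝ, 0 < c ∧ 0 < C ∧ ∀ (d : E → ℝ) (A : Matrix E E ℝ), (∀ e, C ≤ d e) →
      (∀ e f, |A e f| ≤ K) →
        IsUnit (W * diagonal d * Wᵀ).det ∧ IsUnit (W * (diagonal d + A) * Wᵀ).det ∧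
        |ω ⬝ᵥ (schurCompl W (diagonal d + A) *ᵥ ω) - ω ⬝ᵥ (schurCompl W (diagonal d) *ᵥ ω)|
          ≤ c := by
  obtain ⟨L, hLW⟩ : ∃ L : Matrix (Fin k) E ℝ, L * Wᵀ = 1 :=
    ⟨(W * Wᵀ)⁻¹ * W, by rw [Matrix.mul_assoc, nonsing_inv_mul _ hW]⟩
  obtain ⟨B, hB0, hB⟩ := exists_norm_inv_mulVec_le W ω
  obtain ⟨a, ha0, ha⟩ : ∃ a, 0 ≤ a ∧ ∀ A : Matrix E E ℝ, (∀ e f, |A e f| ≤ K) → ‖A‖ ≤ a :=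
    ⟨_, by positivity, fun A hA =>
      linfty_opNorm_le_of_abs_le A (le_max_right K 0) fun e f => (hA e f).trans (le_max_left _ _)⟩
  refine ⟨Fintype.card E * (‖ω‖ + ‖Wᵀ‖ * B) * (a + a * ‖Wᵀ‖ * k * ‖W‖ * a) * (‖ω‖ + ‖Wᵀ‖ * B)
    + 1, ‖L‖ ^ 2 + Fintype.card E * a + 1, by positivity, by positivity, fun d A hd hA => ?_⟩
  have hcoercive : ∀ A' : Matrix E E ℝ, ‖A'‖ ≤ a →
      ∀ x, ‖x‖ ^ 2 ≤ x ⬝ᵥ ((W * (diagonal d + A') * Wᵀ) *ᵥ x) := fun A' hA' =>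
    coercive_mul_diagonal_add_mul_transpose hLW A' fun e => (hd e).trans' <| by
      have := mul_le_mul_of_nonneg_left hA' (Nat.cast_nonneg (α := ℝ) (Fintype.card E))
      linarith
  have hK₀ := hcoercive 0 (by simpa using ha0)
  rw [add_zero] at hK₀
  have hK₁ := hcoercive A (ha A hA)
  refine ⟨isUnit_det_of_coercive hK₀, isUnit_det_of_coercive hK₁, ?_⟩
  rw [dotProduct_schurCompl_add_mulVec_sub_eq (diagonal_transpose d) A
    (isUnit_det_of_coercive hK₀) (isUnit_det_of_coercive hK₁)]
  have hr : ‖residual W (diagonal d) ω‖ ≤ ‖ω‖ + ‖Wᵀ‖ * B :=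
    (norm_sub_le _ _).trans (add_le_add le_rfl ((linfty_opNorm_mulVec _ _).trans
      (by gcongr; exact hB d fun e => (hd e).trans' (by positivity))))
  have hQ : ‖(W * (diagonal d + A) * Wᵀ)⁻¹‖ ≤ k := by
    simpa using linfty_opNorm_inv_le_of_coercive hK₁
  have hM : ‖A - A * Wᵀ * (W * (diagonal d + A) * Wᵀ)⁻¹ * W * A‖
      ≤ a + a * ‖Wᵀ‖ * k * ‖W‖ * a :=
    (norm_sub_mul_mul_mul_mul_le _ _ _).trans (by gcongr <;> exact ha A hA)
  calc _ ≤ _ := abs_dotProduct_mulVec_le _ _ _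
    _ ≤ _ := by gcongr
    _ ≤ _ := le_add_of_nonneg_right zero_le_one

end Bounds

end Matrix

theorem stmt_13_general {U : Type*}
    [Fintype E]
    {h : ℕ}
    (M : Fin h → E → ℤ)
    (ω : E → ℝ)
    (N : Fin (h + 1) → E → ℝ)
    (hN1 : ∀ i : Fin h, N i.castSucc = fun e => (M i e : ℝ))
    (hN2 : N (Fin.last h) = ω)
    (y : E → U → ℝ)
    (A : U → Matrix E E ℝ) (hA : ∃ K : ℝ, ∀ s e f, |A s e f| ≤ K)
    (hMinv : ∀ s : U, IsUnit
      (rmat M * (Matrix.diagonal (fun e => y e s) + A s) * (rmat M)ᵀ).det) :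
    ∃ c C : ℝ, 0 < c ∧ 0 < C ∧ ∀ s : U, (∀ e, C ≤ y e s) →
      |(Matrix.of N * (Matrix.diagonal (fun e => y e s) + A s) * (Matrix.of N)ᵀ).det /
          (rmat M * (Matrix.diagonal (fun e => y e s) + A s) * (rmat M)ᵀ).det -
        (Matrix.of N * Matrix.diagonal (fun e => y e s) * (Matrix.of N)ᵀ).det /
          (rmat M * Matrix.diagonal (fun e => y e s) * (rmat M)ᵀ).det| ≤ c := by
  rcases isEmpty_or_nonempty U with _ | ⟨⟨s₀⟩⟩
  · exact ⟨1, 1, one_pos, one_pos, fun s => isEmptyElim s⟩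
  obtain ⟨K, hK⟩ := hA
  obtain ⟨c, C, hc, hC, hbound⟩ := exists_abs_dotProduct_schurCompl_diagonal_add_sub_le (rmat M)
    (isUnit_det_mul_transpose_of_isUnit_det _ _ (hMinv s₀)) ω K
  refine ⟨c, C, hc, hC, fun s hs => ?_⟩
  obtain ⟨hK₀, hK₁, hdiff⟩ := hbound (fun e => y e s) (A s) hs (hK s)
  rwa [det_bordered_mul_mul_transpose (Matrix.of N) (rmat M) ω hN1 hN2 _ hK₁,
    det_bordered_mul_mul_transpose (Matrix.of N) (rmat M) ω hN1 hN2 _ hK₀,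
    mul_div_cancel_left₀ _ hK₁.ne_zero, mul_div_cancel_left₀ _ hK₀.ne_zero]

/-- Main theorem: With `M` the cycle basis matrix, `N` its
extension by `ω` (`∂ω = p`), continuous positive functions `y_e : U → ℝ` on a
topological space `U`, and a bounded perturbation `A : U → Mat_{m×m}(ℝ)` such
that `M(Y+A)Mᵀ` and `N(Y+A)Nᵀ` are invertible, the difference
`det(N(Y+A)Nᵀ)/det(M(Y+A)Mᵀ) − det(N Y Nᵀ)/det(M Y Mᵀ)` is `O_y(1)`. -/
theorem stmt_13 {U : Type*} [TopologicalSpace U]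
    [Fintype V] [Fintype E] (src tgt : E → V)
    (hconn : nComp src tgt (Finset.univ : Finset E) = 1)
    {h : ℕ} (hh : h + Fintype.card V = Fintype.card E + 1)
    (M : Fin h → E → ℤ) (hM : IsCycleBasis src tgt M)
    (p : V → ℝ) (hp : ∑ v, p v = 0)
    (ω : E → ℝ) (hω : bnd src tgt ω = p)
    (N : Fin (h + 1) → E → ℝ)
    (hN1 : ∀ i : Fin h, N i.castSucc = fun e => (M i e : ℝ))
    (hN2 : N (Fin.last h) = ω)
    (y : E → U → ℝ) (hypos : ∀ e s, 0 < y e s) (hycont : ∀ e, Continuous (y e))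
    (A : U → Matrix E E ℝ) (hA : ∃ K : ℝ, ∀ s e f, |A s e f| ≤ K)
    (hMinv : ∀ s : U, IsUnit
      (rmat M * (Matrix.diagonal (fun e => y e s) + A s) * (rmat M)ᵀ).det)
    (hNinv : ∀ s : U, IsUnit
      (Matrix.of N * (Matrix.diagonal (fun e => y e s) + A s) * (Matrix.of N)ᵀ).det) :
    ∃ c C : ℝ, 0 < c ∧ 0 < C ∧ ∀ s : U, (∀ e, C ≤ y e s) →
      |(Matrix.of N * (Matrix.diagonal (fun e => y e s) + A s) * (Matrix.of N)ᵀ).det /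
          (rmat M * (Matrix.diagonal (fun e => y e s) + A s) * (rmat M)ᵀ).det -
        (Matrix.of N * Matrix.diagonal (fun e => y e s) * (Matrix.of N)ᵀ).det /
          (rmat M * Matrix.diagonal (fun e => y e s) * (rmat M)ᵀ).det| ≤ c :=
  stmt_13_general M ω N hN1 hN2 y A hA hMinv
end

section
/- Let P be an h × h matrix whose columns are columns of the cycle-basis matrix M of a connected graph G indexed by the complement of a spanning 2-forest F together with one column equal to the sum of the M-columns of two distinct edges e_1, e_2, both of which join the two components of F. Then det(P) = 0; equivalently, det(M_{T_1^c}) + det(M_{T_2^c}) = 0 where T_i = F + e_i, for the appropriate orientation of e_1 and e_2 from one component of F to the other. -/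
open Finset Matrix
open scoped Classical

variable {V E : Type*}

/-- Let `F` be a spanning 2-forest with components `X, Y`, and
`e₁ ≠ e₂` two edges joining `X` to `Y` (oriented from `X` to `Y`). The
`h × h` matrix `P` whose columns are the `M`-columns indexed by
`Fᶜ \ {e₁, e₂}` together with one column equal to the sum of the `M`-columns
of `e₁` and `e₂` has `det P = 0`; equivalently, for suitable column
orderings, `det(M_{T₁ᶜ}) + det(M_{T₂ᶜ}) = 0` where `Tᵢ = F + eᵢ`. -/
theorem stmt_16 [Fintype V] [Fintype E] (src tgt : E → V)
    (hconn : nComp src tgt (Finset.univ : Finset E) = 1)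
    {h : ℕ} (hh : h + Fintype.card V = Fintype.card E + 1)
    (M : Fin h → E → ℤ)
    (hM : IsCycleBasis src tgt M)
    (F : Finset E) (hF : IsSpanning2Forest src tgt F)
    (e₁ e₂ : E) (hne : e₁ ≠ e₂)
    (he₁ : ¬ reach src tgt F (src e₁) (tgt e₁))
    (he₂ : ¬ reach src tgt F (src e₂) (tgt e₂))
    (horient : reach src tgt F (src e₁) (src e₂) ∧ reach src tgt F (tgt e₁) (tgt e₂))
    (σ : Fin h ≃ Option {x // x ∈ (Fᶜ : Finset E) \ {e₁, e₂}}) :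
    (Matrix.of fun i j =>
        (σ j).elim (M i e₁ + M i e₂) (fun k => M i (k : E))).det = 0 ∧
    ∃ (g₁ : Fin h ≃ {x // x ∈ ((insert e₁ F)ᶜ : Finset E)})
      (g₂ : Fin h ≃ {x // x ∈ ((insert e₂ F)ᶜ : Finset E)}),
      (Matrix.of fun i j => M i (g₁ j : E)).det +
        (Matrix.of fun i j => M i (g₂ j : E)).det = 0 := by
  classical
  -- the cut function
  set Y : Finset V := Finset.univ.filter (fun v => reach src tgt F v (tgt e₁)) with hYdef
  have hY : ∀ v, v ∈ Y ↔ reach src tgt F v (tgt e₁) := by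
    intro v; simp [hYdef]
  set c : E → ℤ := fun e => (if tgt e ∈ Y then (1:ℤ) else 0) - (if src e ∈ Y then (1:ℤ) else 0)
    with hcdef
  have hcF : ∀ e ∈ F, c e = 0 := by
    intro e he
    have hr : reach src tgt F (src e) (tgt e) :=
      Relation.EqvGen.rel _ _ ⟨e, he, Or.inl ⟨rfl, rfl⟩⟩
    have hiff : src e ∈ Y ↔ tgt e ∈ Y := by
      rw [hY, hY]
      exact ⟨fun h => Relation.EqvGen.trans _ _ _ (Relation.EqvGen.symm _ _ hr) h,
        fun h => Relation.EqvGen.trans _ _ _ hr h⟩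
    simp only [hcdef, hiff, sub_self]
  have ht₁ : tgt e₁ ∈ Y := (hY _).2 (Relation.EqvGen.refl _)
  have hs₁ : src e₁ ∉ Y := fun h => he₁ ((hY _).1 h)
  have ht₂ : tgt e₂ ∈ Y := (hY _).2 (Relation.EqvGen.symm _ _ horient.2)
  have hs₂ : src e₂ ∉ Y := fun h =>
    he₁ (Relation.EqvGen.trans _ _ _ horient.1 ((hY _).1 h))
  have hc₁ : c e₁ = 1 := by simp [hcdef, ht₁, hs₁]
  have hc₂ : c e₂ = 1 := by simp [hcdef, ht₂, hs₂]
  -- cycles vanish on the cut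
  have hsum : ∀ x : E → ℤ, bnd src tgt x = 0 → ∑ e, c e * x e = 0 := by
    intro x hx
    have : ∑ e, c e * x e = ∑ v ∈ Y, bnd src tgt x v := by
      unfold bnd
      rw [Finset.sum_comm]
      refine Finset.sum_congr rfl fun e _ => ?_
      rw [← Finset.mul_sum, Finset.sum_sub_distrib,
        Finset.sum_ite_eq Y (tgt e) (fun _ => (1:ℤ)),
        Finset.sum_ite_eq Y (src e) (fun _ => (1:ℤ)), mul_comm]
    rw [this]
    exact Finset.sum_eq_zero fun v _ => by rw [hx]; rfl
  -- the key linear relation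
  have key : ∀ i, (M i e₁ + M i e₂) + ∑ e ∈ ((Fᶜ : Finset E) \ {e₁, e₂}), c e * M i e = 0 := by
    intro i
    have h0 := hsum (M i) (hM.1 i)
    have hsub : ({e₁, e₂} : Finset E) ⊆ Finset.univ := Finset.subset_univ _
    rw [← Finset.sum_sdiff hsub] at h0
    have h1 : ∑ e ∈ (Finset.univ \ {e₁, e₂} : Finset E), c e * M i e
        = ∑ e ∈ ((Fᶜ : Finset E) \ {e₁, e₂}), c e * M i e := by
      refine (Finset.sum_subset ?_ ?_).symm
      · intro e he
        simp only [Finset.mem_sdiff, Finset.mem_compl] at he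
        simp [he.2]
      · intro e he hne'
        have he2 : e ∉ ({e₁, e₂} : Finset E) := (Finset.mem_sdiff.1 he).2
        have heF : e ∈ F := by
          by_contra hF'
          exact hne' (Finset.mem_sdiff.2 ⟨Finset.mem_compl.2 hF', he2⟩)
        rw [hcF e heF, zero_mul]
    rw [h1, Finset.sum_pair hne, hc₁, hc₂, one_mul, one_mul] at h0
    linarith
  have he₁c : e₁ ∉ F := fun h => he₁ (Relation.EqvGen.rel _ _ ⟨e₁, h, Or.inl ⟨rfl, rfl⟩⟩)
  have he₂c : e₂ ∉ F := fun h => he₂ (Relation.EqvGen.rel _ _ ⟨e₂, h, Or.inl ⟨rfl, rfl⟩⟩)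
  set Pz : Matrix (Fin h) (Fin h) ℤ := Matrix.of fun i j =>
      (σ j).elim (M i e₁ + M i e₂) (fun k => M i (k : E)) with hPzdef
  -- Part 1: det Pz = 0
  have hdet : Pz.det = 0 := by
    rw [← Matrix.exists_mulVec_eq_zero_iff]
    refine ⟨fun j => (σ j).elim 1 (fun k => c (k : E)), ?_, ?_⟩
    · intro hv
      have := congrFun hv (σ.symm none)
      rw [Equiv.apply_symm_apply] at this
      simp at this
    · funext i
      have : Pz.mulVec (fun j => (σ j).elim 1 (fun k => c (k : E))) i
          = ∑ j, (σ j).elim (M i e₁ + M i e₂) (fun k => M i (k : E)) *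
              (σ j).elim 1 (fun k => c (k : E)) := by
        simp [Matrix.mulVec, dotProduct, hPzdef]
      rw [this, Equiv.sum_comp σ (fun o : Option {x // x ∈ ((Fᶜ : Finset E) \ {e₁, e₂})} =>
        o.elim (M i e₁ + M i e₂) (fun k => M i (k : E)) * o.elim 1 (fun k => c (k : E))),
        Fintype.sum_option]
      have h2 : ∑ k : {x // x ∈ ((Fᶜ : Finset E) \ {e₁, e₂})}, M i (k : E) * c (k : E)
          = ∑ e ∈ ((Fᶜ : Finset E) \ {e₁, e₂}), M i e * c e := Finset.sum_coe_sort ((Fᶜ : Finset E) \ {e₁, e₂}) (fun e => M i e * c e)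
      simp only [Option.elim, mul_one]
      rw [h2]
      have := key i
      have h3 : ∑ e ∈ ((Fᶜ : Finset E) \ {e₁, e₂}), M i e * c e = ∑ e ∈ ((Fᶜ : Finset E) \ {e₁, e₂}), c e * M i e := by
        exact Finset.sum_congr rfl fun e _ => mul_comm _ _
      rw [h3]
      exact this
  refine ⟨hdet, ?_⟩
  -- Part 2: build the two equivalences
  have hm₂ : e₂ ∈ ((insert e₁ F)ᶜ : Finset E) := by
    simp [Finset.mem_compl, he₂c, Ne.symm hne]
  have hm₁ : e₁ ∈ ((insert e₂ F)ᶜ : Finset E) := by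
    simp [Finset.mem_compl, he₁c, hne]
  have hmS₁ : ∀ k ∈ ((Fᶜ : Finset E) \ {e₁, e₂}), k ∈ ((insert e₁ F)ᶜ : Finset E) := by
    intro k hk
    simp only [Finset.mem_sdiff, Finset.mem_compl, Finset.mem_insert,
      Finset.mem_singleton, not_or] at hk ⊢
    exact ⟨hk.2.1, hk.1⟩
  have hmS₂ : ∀ k ∈ ((Fᶜ : Finset E) \ {e₁, e₂}), k ∈ ((insert e₂ F)ᶜ : Finset E) := by
    intro k hk
    simp only [Finset.mem_sdiff, Finset.mem_compl, Finset.mem_insert,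
      Finset.mem_singleton, not_or] at hk ⊢
    exact ⟨hk.2.2, hk.1⟩
  have hback₁ : ∀ x : E, x ∈ ((insert e₁ F)ᶜ : Finset E) → x ≠ e₂ → x ∈ ((Fᶜ : Finset E) \ {e₁, e₂}) := by
    intro x hx hxe
    simp only [Finset.mem_compl, Finset.mem_insert, not_or] at hx
    simp only [Finset.mem_sdiff, Finset.mem_compl, Finset.mem_insert,
      Finset.mem_singleton, not_or]
    exact ⟨hx.2, hx.1, hxe⟩
  have hback₂ : ∀ x : E, x ∈ ((insert e₂ F)ᶜ : Finset E) → x ≠ e₁ → x ∈ ((Fᶜ : Finset E) \ {e₁, e₂}) := by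
    intro x hx hxe
    simp only [Finset.mem_compl, Finset.mem_insert, not_or] at hx
    simp only [Finset.mem_sdiff, Finset.mem_compl, Finset.mem_insert,
      Finset.mem_singleton, not_or]
    exact ⟨hx.2, hxe, hx.1⟩
  have hkne₂ : ∀ k : {x // x ∈ ((Fᶜ : Finset E) \ {e₁, e₂})}, (k : E) ≠ e₂ := by
    intro k hk
    have := k.2
    simp [hk] at this
  have hkne₁ : ∀ k : {x // x ∈ ((Fᶜ : Finset E) \ {e₁, e₂})}, (k : E) ≠ e₁ := by
    intro k hk
    have := k.2
    simp [hk] at this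
  let eqv₁ : Option {x // x ∈ ((Fᶜ : Finset E) \ {e₁, e₂})} ≃ {x // x ∈ ((insert e₁ F)ᶜ : Finset E)} :=
    { toFun := fun o => o.elim ⟨e₂, hm₂⟩ (fun k => ⟨(k : E), hmS₁ _ k.2⟩)
      invFun := fun x => if hx : (x : E) = e₂ then none else some ⟨(x : E), hback₁ _ x.2 hx⟩
      left_inv := by
        rintro (_ | k)
        · simp
        · simp [hkne₂ k]
      right_inv := by
        rintro ⟨x, hx⟩
        by_cases hxe : x = e₂
        · subst hxe; simp
        · simp [hxe] }
  let eqv₂ : Option {x // x ∈ ((Fᶜ : Finset E) \ {e₁, e₂})} ≃ {x // x ∈ ((insert e₂ F)ᶜ : Finset E)} :=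
    { toFun := fun o => o.elim ⟨e₁, hm₁⟩ (fun k => ⟨(k : E), hmS₂ _ k.2⟩)
      invFun := fun x => if hx : (x : E) = e₁ then none else some ⟨(x : E), hback₂ _ x.2 hx⟩
      left_inv := by
        rintro (_ | k)
        · simp
        · simp [hkne₁ k]
      right_inv := by
        rintro ⟨x, hx⟩
        by_cases hxe : x = e₁
        · subst hxe; simp
        · simp [hxe] }
  refine ⟨σ.trans eqv₁, σ.trans eqv₂, ?_⟩
  set j₀ : Fin h := σ.symm none with hj₀def
  have hσj₀ : σ j₀ = none := σ.apply_symm_apply none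
  have hcol : ∀ j : Fin h, j ≠ j₀ → ∃ k, σ j = some k := by
    intro j hj
    cases hσ : σ j with
    | none =>
        exact absurd (by rw [hj₀def, ← hσ, Equiv.symm_apply_apply]) hj
    | some k => exact ⟨k, rfl⟩
  set B₁ : Matrix (Fin h) (Fin h) ℤ :=
    Matrix.of (fun i j => M i (((σ.trans eqv₁) j : E))) with hB₁def
  set B₂ : Matrix (Fin h) (Fin h) ℤ :=
    Matrix.of (fun i j => M i (((σ.trans eqv₂) j : E))) with hB₂def
  have hPzB : Pz = B₁.updateCol j₀ ((fun i => M i e₁) + (fun i => M i e₂)) := by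
    ext i j
    rw [Matrix.updateCol_apply]
    by_cases hj : j = j₀
    · subst hj
      simp [hPzdef, hσj₀]
    · obtain ⟨k, hk⟩ := hcol j hj
      simp [hPzdef, hB₁def, hk, hj, eqv₁]
  have hB₁self : B₁.updateCol j₀ (fun i => M i e₂) = B₁ := by
    ext i j
    rw [Matrix.updateCol_apply]
    by_cases hj : j = j₀
    · subst hj
      simp [hB₁def, hσj₀, eqv₁]
    · simp [hj]
  have hB₂eq : B₁.updateCol j₀ (fun i => M i e₁) = B₂ := by
    ext i j
    rw [Matrix.updateCol_apply]
    by_cases hj : j = j₀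
    · subst hj
      simp [hB₂def, hσj₀, eqv₂]
    · obtain ⟨k, hk⟩ := hcol j hj
      simp [hB₁def, hB₂def, hk, hj, eqv₁, eqv₂]
  have : Pz.det = B₂.det + B₁.det := by
    rw [hPzB, Matrix.det_updateCol_add, hB₁self, hB₂eq]
  rw [hdet] at this
  show B₁.det + B₂.det = 0
  linarith
end
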